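/- arXiv:2005.02889 — 5 statements merged into one kernel-verified Lean document; each statement's English description precedes it below -/
import Mathlib

section
/- There exist constants ε0 > 0 and 0 < c' ≤ c < ∞, depending only on the model constants c1, c2, c3, c4 and Ḡ(1), such that for every nonnegative integrable hazard λ on [0,1]: if h²(p_λ, p_{λ0}) ≤ ε0², then c' ≤ ∫_0^1 λ(u)du ≤ c. -/
open MeasureTheory Real Set

noncomputable section

/-- Cumulative hazard `Λ(t) = ∫_0^t λ(u) du`. -/
def cumHaz (lam : ℝ → ℝ) (t : ℝ) : ℝ := ∫ u in (0:ℝ)..t, lam u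

/-- Survival function `S(t) = exp(−Λ(t))`. -/
def survF (lam : ℝ → ℝ) (t : ℝ) : ℝ := Real.exp (-(cumHaz lam t))

/-- `Ḡ(u) = 1 - ∫_0^u g(v) dv`. -/
def Gbar (g : ℝ → ℝ) (u : ℝ) : ℝ := 1 - ∫ v in (0:ℝ)..u, g v

/-- Squared Hellinger distance between the censored-data densities associated with the
hazards `lam` and `lam0`, for censoring density `g`. -/
def hellingerSq (g lam0 lam : ℝ → ℝ) : ℝ :=
  (∫ y in (0:ℝ)..1, (Real.sqrt (g y * survF lam y) - Real.sqrt (g y * survF lam0 y)) ^ 2)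
    + (∫ y in (0:ℝ)..1,
        Gbar g y * (Real.sqrt (lam y * survF lam y) - Real.sqrt (lam0 y * survF lam0 y)) ^ 2)
    + Gbar g 1 * (Real.sqrt (survF lam 1) - Real.sqrt (survF lam0 1)) ^ 2

/-- If the squared Hellinger distance `h²(p_λ, p_{λ0})` is small enough, then the total mass
`Λ(1) = ∫_0^1 λ` is bounded above and below by positive constants depending only on the
model constants. -/
theorem total_hazard_mass_bounded
    (lam0 g : ℝ → ℝ) (c1 c2 c3 c4 : ℝ)
    (hc1 : 0 < c1) (hc3 : 0 < c3)
    (hlam0cont : ContinuousOn lam0 (Set.Icc 0 1))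
    (hlam0 : ∀ t ∈ Set.Icc (0:ℝ) 1, c1 ≤ lam0 t ∧ lam0 t ≤ c2)
    (hgmeas : Measurable g)
    (hg : ∀ t ∈ Set.Ico (0:ℝ) 1, c3 ≤ g t ∧ g t ≤ c4)
    (hgint : (∫ v in (0:ℝ)..1, g v) < 1) :
    ∃ ε0 c' c : ℝ, 0 < ε0 ∧ 0 < c' ∧ c' ≤ c ∧
      ∀ lam : ℝ → ℝ, Measurable lam →
        (∀ u ∈ Set.Icc (0:ℝ) 1, 0 ≤ lam u) →
        IntervalIntegrable lam volume 0 1 →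
        hellingerSq g lam0 lam ≤ ε0 ^ 2 →
        c' ≤ (∫ u in (0:ℝ)..1, lam u) ∧ (∫ u in (0:ℝ)..1, lam u) ≤ c := by
  -- integrability of g on [0,1]
  have hgI : IntervalIntegrable g volume 0 1 := by
    rw [intervalIntegrable_iff_integrableOn_Ioc_of_le zero_le_one,
      integrableOn_Ioc_iff_integrableOn_Ioo]
    refine Integrable.mono' (integrable_const c4) hgmeas.aestronglyMeasurable ?_
    filter_upwards [ae_restrict_mem measurableSet_Ioo] with t ht
    have ht' : t ∈ Set.Ico (0:ℝ) 1 := ⟨ht.1.le, ht.2⟩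
    rw [Real.norm_eq_abs, abs_of_nonneg (le_trans hc3.le (hg t ht').1)]
    exact (hg t ht').2
  -- Gbar is nonneg on [0,1]
  have hGbar_pos : ∀ y ∈ Set.Icc (0:ℝ) 1, 0 < Gbar g y := by
    intro y hy
    have h0y : IntervalIntegrable g volume 0 y := hgI.mono_set (by
      rw [Set.uIcc_of_le hy.1, Set.uIcc_of_le zero_le_one]
      exact Set.Icc_subset_Icc le_rfl hy.2)
    have hy1 : IntervalIntegrable g volume y 1 := hgI.mono_set (by
      rw [Set.uIcc_of_le hy.2, Set.uIcc_of_le zero_le_one]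
      exact Set.Icc_subset_Icc hy.1 le_rfl)
    have hadd := intervalIntegral.integral_add_adjacent_intervals h0y hy1
    have hne : ∀ᵐ t : ℝ ∂volume, t ≠ 1 := by rw [ae_iff]; simp
    have hne' : ∀ᵐ t ∂(volume.restrict (Set.Icc y 1)), t ≠ 1 := ae_restrict_of_ae hne
    have hnn : 0 ≤ ∫ v in y..1, g v := by
      apply intervalIntegral.integral_nonneg_of_ae_restrict hy.2
      filter_upwards [ae_restrict_mem measurableSet_Icc, hne'] with t ht htne
      have ht' : t ∈ Set.Ico (0:ℝ) 1 := ⟨le_trans hy.1 ht.1, lt_of_le_of_ne ht.2 htne⟩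
      exact le_trans hc3.le (hg t ht').1
    have : (∫ v in (0:ℝ)..y, g v) ≤ ∫ v in (0:ℝ)..1, g v := by linarith
    have : Gbar g y = 1 - ∫ v in (0:ℝ)..y, g v := rfl
    rw [this]; linarith
  have hG : 0 < Gbar g 1 := hGbar_pos 1 ⟨zero_le_one, le_rfl⟩
  -- Λ0(1) ≥ c1
  have hlam0I : IntervalIntegrable lam0 volume 0 1 := by
    apply ContinuousOn.intervalIntegrable
    rwa [Set.uIcc_of_le zero_le_one]
  have hL0 : c1 ≤ cumHaz lam0 1 := by
    have h := intervalIntegral.integral_mono_on zero_le_one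
      (intervalIntegrable_const (c := c1)) hlam0I (fun x hx => (hlam0 x hx).1)
    simpa [cumHaz] using h
  set a : ℝ := Real.sqrt (survF lam0 1) with ha_def
  have ha_pos : 0 < a := Real.sqrt_pos.mpr (Real.exp_pos _)
  have ha_lt : a < 1 := by
    rw [ha_def, Real.sqrt_lt' one_pos]
    show Real.exp (-(cumHaz lam0 1)) < 1 ^ 2
    rw [one_pow]
    exact Real.exp_lt_one_iff.mpr (by linarith)
  set δ : ℝ := min (a/2) ((1-a)/2) with hδ_def
  have hδ_pos : 0 < δ := lt_min (by linarith) (by linarith)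
  refine ⟨Real.sqrt (Gbar g 1) * δ, -2 * Real.log ((1+a)/2), -2 * Real.log (a/2),
    mul_pos (Real.sqrt_pos.mpr hG) hδ_pos, ?_, ?_, ?_⟩
  · have : Real.log ((1+a)/2) < 0 := Real.log_neg (by linarith) (by linarith)
    linarith
  · have : Real.log (a/2) ≤ Real.log ((1+a)/2) :=
      Real.log_le_log (by linarith) (by linarith)
    linarith
  intro lam hmeas hnn hI hH
  -- the three terms
  have hT1 : 0 ≤ ∫ y in (0:ℝ)..1,
      (Real.sqrt (g y * survF lam y) - Real.sqrt (g y * survF lam0 y)) ^ 2 :=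
    intervalIntegral.integral_nonneg zero_le_one (fun u _ => sq_nonneg _)
  have hT2 : 0 ≤ ∫ y in (0:ℝ)..1,
      Gbar g y * (Real.sqrt (lam y * survF lam y) - Real.sqrt (lam0 y * survF lam0 y)) ^ 2 :=
    intervalIntegral.integral_nonneg zero_le_one
      (fun u hu => mul_nonneg (hGbar_pos u hu).le (sq_nonneg _))
  have hT3 : Gbar g 1 * (Real.sqrt (survF lam 1) - a) ^ 2 ≤ (Real.sqrt (Gbar g 1) * δ) ^ 2 := by
    rw [hellingerSq] at hH; linarith
  rw [mul_pow, Real.sq_sqrt hG.le] at hT3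
  have hsq : (Real.sqrt (survF lam 1) - a) ^ 2 ≤ δ ^ 2 := le_of_mul_le_mul_left hT3 hG
  have habs : |Real.sqrt (survF lam 1) - a| ≤ δ := by
    have := Real.sqrt_le_sqrt hsq
    rwa [Real.sqrt_sq_eq_abs, Real.sqrt_sq hδ_pos.le] at this
  rw [abs_le] at habs
  have hδ1 : δ ≤ a/2 := min_le_left _ _
  have hδ2 : δ ≤ (1-a)/2 := min_le_right _ _
  set L : ℝ := ∫ u in (0:ℝ)..1, lam u with hL_def
  have hsexp : Real.sqrt (survF lam 1) = Real.exp (-(L/2)) := by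
    have hS : survF lam 1 = (Real.exp (-(L/2)))^2 := by
      show Real.exp (-(cumHaz lam 1)) = _
      rw [sq, ← Real.exp_add]
      congr 1
      show -(cumHaz lam 1) = -(L/2) + -(L/2)
      rw [show cumHaz lam 1 = L from rfl]; ring
    rw [hS, Real.sqrt_sq (Real.exp_pos _).le]
  rw [hsexp] at habs
  have hlow : a/2 ≤ Real.exp (-(L/2)) := by linarith [habs.1]
  have hhigh : Real.exp (-(L/2)) ≤ (1+a)/2 := by linarith [habs.2]
  constructor
  · rw [show (1+a)/2 = Real.exp (Real.log ((1+a)/2)) from (Real.exp_log (by linarith)).symm] at hhigh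
    have := Real.exp_le_exp.mp hhigh
    linarith
  · rw [show a/2 = Real.exp (Real.log (a/2)) from (Real.exp_log (by linarith)).symm] at hlow
    have := Real.exp_le_exp.mp hlow
    linarith
end
end

section
/- There exist ε0 > 0 and C > 0, depending only on the model constants, such that for every 0 < ε ≤ ε0 and every nonnegative integrable hazard λ on [0,1] with h²(p_λ, p_{λ0}) ≤ ε², one has H²(λ, λ0) = ∫_0^1 (√(λ(u)) − √(λ0(u)))² du ≤ C·ε². -/
open MeasureTheory Real Set

noncomputable section

/-- Pseudo-Hellinger squared distance between two nonnegative functions on `[0,1]`: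
`H²(λ1,λ2) = ∫_0^1 (√λ1 − √λ2)²`. -/
def HSq (l1 l2 : ℝ → ℝ) : ℝ := ∫ u in (0:ℝ)..1, (Real.sqrt (l1 u) - Real.sqrt (l2 u)) ^ 2

/-! The boundary term of `h²` keeps `S(1)`, hence `S` on all of `[0,1]`, above
`δ = e^{-c₂}/4` once `ε` is small. Then the splitting
`√S (√λ - √λ₀) = (√(λS) - √(λ₀S₀)) + √λ₀ (√S₀ - √S)` gives pointwise
`δ (√λ - √λ₀)² ≤ 2 (√(λS) - √(λ₀S₀))² + 2 c₂ (√S - √S₀)²`, and the two integrals on the right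
are controlled by the second and first terms of `h²`, whose weights are `Ḡ ≥ Ḡ(1)` and `g ≥ c₃`. -/

open intervalIntegral

lemma sq_sqrt_sub_sqrt_le_abs_add_abs (p q : ℝ) : (√p - √q) ^ 2 ≤ |p| + |q| := by
  have hp := sqrt_le_sqrt (le_abs_self p)
  have hq := sqrt_le_sqrt (le_abs_self q)
  nlinarith [sq_sqrt (abs_nonneg p), sq_sqrt (abs_nonneg q), sqrt_nonneg p, sqrt_nonneg q,
    mul_nonneg (sqrt_nonneg p) (sqrt_nonneg q)]

lemma mul_sq_sqrt_sub_sqrt_le {l l0 s s0 : ℝ} (hl : 0 ≤ l) (hl0 : 0 ≤ l0) (hs : 0 ≤ s) :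
    s * (√l - √l0) ^ 2 ≤ 2 * (√(l * s) - √(l0 * s0)) ^ 2 + 2 * l0 * (√s - √s0) ^ 2 := by
  rw [sqrt_mul hl, sqrt_mul hl0]
  calc s * (√l - √l0) ^ 2
      = ((√l * √s - √l0 * √s0) + √l0 * (√s0 - √s)) ^ 2 := by
        nth_rewrite 1 [← sq_sqrt hs]; ring
    _ ≤ 2 * ((√l * √s - √l0 * √s0) ^ 2 + (√l0 * (√s0 - √s)) ^ 2) := add_sq_le
    _ = 2 * (√l * √s - √l0 * √s0) ^ 2 + 2 * l0 * (√s - √s0) ^ 2 := by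
      rw [mul_pow, sq_sqrt hl0]; ring

lemma le_of_sq_sqrt_sub_sqrt_le {s s0 m : ℝ} (hs : 0 ≤ s) (hm : 0 ≤ m) (hms0 : m ≤ s0)
    (h : (√s - √s0) ^ 2 ≤ m / 4) : m / 4 ≤ s := by
  have hm4 : m / 4 = (√m / 2) ^ 2 := by rw [div_pow, sq_sqrt hm]; norm_num
  rw [hm4] at h ⊢
  have hlow := (abs_le_of_sq_le_sq' h (by positivity)).1
  calc (√m / 2) ^ 2 ≤ √s ^ 2 := by gcongr; linarith [sqrt_le_sqrt hms0]
    _ = s := sq_sqrt hs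

lemma IntervalIntegrable.sqrt_sub_sqrt_sq {f h : ℝ → ℝ} {a b : ℝ}
    (hf : IntervalIntegrable f volume a b) (hh : IntervalIntegrable h volume a b) :
    IntervalIntegrable (fun x => (√(f x) - √(h x)) ^ 2) volume a b :=
  (hf.abs.add hh.abs).mono_fun'
    (((continuous_sqrt.comp_aestronglyMeasurable hf.def'.aestronglyMeasurable).sub
      (continuous_sqrt.comp_aestronglyMeasurable hh.def'.aestronglyMeasurable)).pow 2)
    (Filter.Eventually.of_forall fun x => by
      simpa only [norm_pow, norm_eq_abs, sq_abs] using sq_sqrt_sub_sqrt_le_abs_add_abs (f x) (h x))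

lemma intervalIntegrable_of_abs_le_on_Ioo {f : ℝ → ℝ} {a b C : ℝ} (hab : a ≤ b)
    (hf : Measurable f) (hC : ∀ x ∈ Ioo a b, |f x| ≤ C) : IntervalIntegrable f volume a b := by
  refine (intervalIntegrable_const (c := C)).mono_fun' hf.aestronglyMeasurable ?_
  rw [uIoc_of_le hab, ← Measure.restrict_congr_set Ioo_ae_eq_Ioc]
  filter_upwards [ae_restrict_mem measurableSet_Ioo] with x hx
  exact hC x hx

lemma HSq_nonneg (l1 l2 : ℝ → ℝ) : 0 ≤ HSq l1 l2 :=
  integral_nonneg zero_le_one fun _ _ => sq_nonneg _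

lemma IntervalIntegrable.mono_Icc_zero_one {f : ℝ → ℝ} (hf : IntervalIntegrable f volume 0 1)
    {a b : ℝ} (ha : a ∈ Icc (0:ℝ) 1) (hb : b ∈ Icc (0:ℝ) 1) : IntervalIntegrable f volume a b :=
  hf.mono_set (uIcc_subset_uIcc (by rwa [uIcc_of_le zero_le_one]) (by rwa [uIcc_of_le zero_le_one]))

section Survival

variable {lam : ℝ → ℝ}

lemma cumHaz_monotoneOn (hI : IntervalIntegrable lam volume 0 1)
    (hnn : ∀ t ∈ Icc (0:ℝ) 1, 0 ≤ lam t) : MonotoneOn (cumHaz lam) (Icc 0 1) := by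
  intro a ha b hb hab
  have h0 : (0:ℝ) ∈ Icc (0:ℝ) 1 := ⟨le_rfl, zero_le_one⟩
  have hdiff : cumHaz lam b - cumHaz lam a = ∫ u in a..b, lam u :=
    integral_interval_sub_left (hI.mono_Icc_zero_one h0 hb) (hI.mono_Icc_zero_one h0 ha)
  have hpos : 0 ≤ ∫ u in a..b, lam u :=
    integral_nonneg hab fun u hu => hnn u ⟨ha.1.trans hu.1, hu.2.trans hb.2⟩
  linarith

lemma survF_antitoneOn (hI : IntervalIntegrable lam volume 0 1)
    (hnn : ∀ t ∈ Icc (0:ℝ) 1, 0 ≤ lam t) : AntitoneOn (survF lam) (Icc 0 1) :=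
  fun _ ha _ hb hab => exp_le_exp.2 (neg_le_neg (cumHaz_monotoneOn hI hnn ha hb hab))

lemma survF_continuousOn (hI : IntervalIntegrable lam volume 0 1) :
    ContinuousOn (survF lam) (uIcc 0 1) :=
  continuous_exp.comp_continuousOn
    (continuousOn_primitive_interval ((intervalIntegrable_iff').1 hI)).neg

lemma exp_neg_le_survF {c t : ℝ} (hI : IntervalIntegrable lam volume 0 1)
    (hnn : ∀ t ∈ Icc (0:ℝ) 1, 0 ≤ lam t) (hc : ∀ t ∈ Icc (0:ℝ) 1, lam t ≤ c)
    (ht : t ∈ Icc (0:ℝ) 1) : exp (-c) ≤ survF lam t := by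
  have hc0 : 0 ≤ c := (hnn t ht).trans (hc t ht)
  have hmono : cumHaz lam t ≤ ∫ _ in (0:ℝ)..t, c :=
    integral_mono_on ht.1 (hI.mono_Icc_zero_one ⟨le_rfl, zero_le_one⟩ ht) intervalIntegrable_const
      fun u hu => hc u ⟨hu.1, hu.2.trans ht.2⟩
  rw [intervalIntegral.integral_const, smul_eq_mul] at hmono
  exact exp_le_exp.2 (by nlinarith [ht.2])

end Survival

lemma Gbar_one_le {g : ℝ → ℝ} (hgI : IntervalIntegrable g volume 0 1)
    (hg : ∀ t ∈ Ioo (0:ℝ) 1, 0 ≤ g t) {y : ℝ} (hy : y ∈ Icc (0:ℝ) 1) : Gbar g 1 ≤ Gbar g y := by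
  have hdiff : (∫ v in (0:ℝ)..1, g v) - ∫ v in (0:ℝ)..y, g v = ∫ v in y..1, g v :=
    integral_interval_sub_left hgI (hgI.mono_Icc_zero_one ⟨le_rfl, zero_le_one⟩ hy)
  have hpos : ∫ _ in y..1, (0:ℝ) ≤ ∫ v in y..1, g v :=
    integral_mono_on_of_le_Ioo hy.2 intervalIntegrable_const
      (hgI.mono_Icc_zero_one hy ⟨zero_le_one, le_rfl⟩) fun t ht => hg t ⟨hy.1.trans_lt ht.1, ht.2⟩
  rw [intervalIntegral.integral_zero] at hpos
  simp only [Gbar]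
  linarith

lemma Gbar_continuousOn {g : ℝ → ℝ} (hgI : IntervalIntegrable g volume 0 1) :
    ContinuousOn (Gbar g) (uIcc 0 1) :=
  continuousOn_const.sub (continuousOn_primitive_interval ((intervalIntegrable_iff').1 hgI))

lemma mul_HSq_le_HSq_mul {w s s0 : ℝ → ℝ} {c : ℝ} (hc : 0 ≤ c)
    (hwI : IntervalIntegrable w volume 0 1) (hw : ∀ t ∈ Ioo (0:ℝ) 1, c ≤ w t)
    (hs : ContinuousOn s (uIcc 0 1)) (hs0 : ContinuousOn s0 (uIcc 0 1)) :
    c * HSq s s0 ≤ HSq (fun t => w t * s t) (fun t => w t * s0 t) := by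
  simp only [HSq, ← intervalIntegral.integral_const_mul]
  refine integral_mono_on_of_le_Ioo zero_le_one
    ((hs.intervalIntegrable.sqrt_sub_sqrt_sq hs0.intervalIntegrable).const_mul c)
    ((hwI.mul_continuousOn hs).sqrt_sub_sqrt_sq (hwI.mul_continuousOn hs0)) fun t ht => ?_
  have hw0 : 0 ≤ w t := hc.trans (hw t ht)
  rw [sqrt_mul hw0, sqrt_mul hw0, ← mul_sub, mul_pow, sq_sqrt hw0]
  exact mul_le_mul_of_nonneg_right (hw t ht) (sq_nonneg _)

lemma mul_HSq_le_integral_mul {w f h : ℝ → ℝ} {c : ℝ} (hw : ContinuousOn w (uIcc 0 1))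
    (hcw : ∀ t ∈ Ioo (0:ℝ) 1, c ≤ w t) (hf : IntervalIntegrable f volume 0 1)
    (hh : IntervalIntegrable h volume 0 1) :
    c * HSq f h ≤ ∫ t in (0:ℝ)..1, w t * (√(f t) - √(h t)) ^ 2 := by
  simp only [HSq, ← intervalIntegral.integral_const_mul]
  exact integral_mono_on_of_le_Ioo zero_le_one ((hf.sqrt_sub_sqrt_sq hh).const_mul c)
    ((hf.sqrt_sub_sqrt_sq hh).continuousOn_mul hw)
    fun t ht => mul_le_mul_of_nonneg_right (hcw t ht) (sq_nonneg _)

lemma mul_HSq_le_of_le {l l0 s s0 : ℝ → ℝ} {δ c : ℝ} (hδ : 0 ≤ δ)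
    (hl : IntervalIntegrable l volume 0 1) (hl0 : IntervalIntegrable l0 volume 0 1)
    (hs : ContinuousOn s (uIcc 0 1)) (hs0 : ContinuousOn s0 (uIcc 0 1))
    (hl_nn : ∀ t ∈ Icc (0:ℝ) 1, 0 ≤ l t) (hl0_nn : ∀ t ∈ Icc (0:ℝ) 1, 0 ≤ l0 t)
    (hl0c : ∀ t ∈ Icc (0:ℝ) 1, l0 t ≤ c) (hδs : ∀ t ∈ Icc (0:ℝ) 1, δ ≤ s t) :
    δ * HSq l l0 ≤
      2 * HSq (fun t => l t * s t) (fun t => l0 t * s0 t) + 2 * c * HSq s s0 := by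
  have hF := (hl.mul_continuousOn hs).sqrt_sub_sqrt_sq (hl0.mul_continuousOn hs0)
  have hH := hs.intervalIntegrable.sqrt_sub_sqrt_sq hs0.intervalIntegrable
  simp only [HSq, ← intervalIntegral.integral_const_mul]
  rw [← integral_add (hF.const_mul 2) (hH.const_mul _)]
  refine integral_mono_on zero_le_one ((hl.sqrt_sub_sqrt_sq hl0).const_mul δ)
    ((hF.const_mul 2).add (hH.const_mul _)) fun t ht => ?_
  calc δ * (√(l t) - √(l0 t)) ^ 2 ≤ s t * (√(l t) - √(l0 t)) ^ 2 :=
        mul_le_mul_of_nonneg_right (hδs t ht) (sq_nonneg _)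
    _ ≤ 2 * (√(l t * s t) - √(l0 t * s0 t)) ^ 2 + 2 * l0 t * (√(s t) - √(s0 t)) ^ 2 :=
        mul_sq_sqrt_sub_sqrt_le (hl_nn t ht) (hl0_nn t ht) (hδ.trans (hδs t ht))
    _ ≤ 2 * (√(l t * s t) - √(l0 t * s0 t)) ^ 2 + 2 * c * (√(s t) - √(s0 t)) ^ 2 := by
        gcongr; exact hl0c t ht

lemma hellingerSq_lower_bounds {g lam0 lam : ℝ → ℝ} {c : ℝ} (hc : 0 ≤ c)
    (hgI : IntervalIntegrable g volume 0 1) (hg : ∀ t ∈ Ioo (0:ℝ) 1, c ≤ g t)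
    (hG1 : 0 ≤ Gbar g 1) (hlam : IntervalIntegrable lam volume 0 1)
    (hlam0 : IntervalIntegrable lam0 volume 0 1) :
    c * HSq (survF lam) (survF lam0) ≤ hellingerSq g lam0 lam ∧
    Gbar g 1 * HSq (fun t => lam t * survF lam t) (fun t => lam0 t * survF lam0 t) ≤
      hellingerSq g lam0 lam ∧
    Gbar g 1 * (√(survF lam 1) - √(survF lam0 1)) ^ 2 ≤ hellingerSq g lam0 lam := by
  have hS := survF_continuousOn hlam
  have hS0 := survF_continuousOn hlam0
  have hT1 : c * HSq (survF lam) (survF lam0) ≤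
      ∫ y in (0:ℝ)..1, (√(g y * survF lam y) - √(g y * survF lam0 y)) ^ 2 :=
    mul_HSq_le_HSq_mul hc hgI hg hS hS0
  have hT2 := mul_HSq_le_integral_mul (Gbar_continuousOn hgI)
    (fun t ht => Gbar_one_le hgI (fun s hs => hc.trans (hg s hs)) (Ioo_subset_Icc_self ht))
    (hlam.mul_continuousOn hS) (hlam0.mul_continuousOn hS0)
  have hT3_nn := mul_nonneg hG1 (sq_nonneg (√(survF lam 1) - √(survF lam0 1)))
  have hT1_nn := mul_nonneg hc (HSq_nonneg (survF lam) (survF lam0))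
  have hT2_nn := mul_nonneg hG1
    (HSq_nonneg (fun t => lam t * survF lam t) (fun t => lam0 t * survF lam0 t))
  unfold hellingerSq
  exact ⟨by linarith, by linarith, by linarith⟩

/-- A small Hellinger distance between the censored-data densities implies a small
pseudo-Hellinger distance `H²(λ, λ0)` between the hazards, with a constant depending only on
the model constants. -/
theorem hazard_pseudo_hellinger_bound
    (lam0 g : ℝ → ℝ) (c1 c2 c3 c4 : ℝ)
    (hc1 : 0 < c1) (hc3 : 0 < c3)
    (hlam0cont : ContinuousOn lam0 (Set.Icc 0 1))
    (hlam0 : ∀ t ∈ Set.Icc (0:ℝ) 1, c1 ≤ lam0 t ∧ lam0 t ≤ c2)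
    (hgmeas : Measurable g)
    (hg : ∀ t ∈ Set.Ico (0:ℝ) 1, c3 ≤ g t ∧ g t ≤ c4)
    (hgint : (∫ v in (0:ℝ)..1, g v) < 1) :
    ∃ ε0 C : ℝ, 0 < ε0 ∧ 0 < C ∧
      ∀ ε : ℝ, 0 < ε → ε ≤ ε0 →
      ∀ lam : ℝ → ℝ, Measurable lam →
        (∀ u ∈ Set.Icc (0:ℝ) 1, 0 ≤ lam u) →
        IntervalIntegrable lam volume 0 1 →
        hellingerSq g lam0 lam ≤ ε ^ 2 →
        HSq lam lam0 ≤ C * ε ^ 2 := by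
  have hI01 : (1:ℝ) ∈ Icc (0:ℝ) 1 := ⟨zero_le_one, le_rfl⟩
  have hl0_nn : ∀ t ∈ Icc (0:ℝ) 1, 0 ≤ lam0 t := fun t ht => hc1.le.trans (hlam0 t ht).1
  have hc2 : 0 ≤ c2 := (hl0_nn 1 hI01).trans (hlam0 1 hI01).2
  have hl0I : IntervalIntegrable lam0 volume 0 1 :=
    (uIcc_of_le (zero_le_one' ℝ) ▸ hlam0cont).intervalIntegrable
  have hgI : IntervalIntegrable g volume 0 1 := intervalIntegrable_of_abs_le_on_Ioo zero_le_one
    hgmeas fun t ht => by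
      obtain ⟨hlo, hhi⟩ := hg t (Ioo_subset_Ico_self ht)
      rwa [abs_of_nonneg (hc3.le.trans hlo)]
  have hG1 : 0 < Gbar g 1 := sub_pos.2 hgint
  set δ := exp (-c2) / 4
  have hδ : 0 < δ := by positivity
  refine ⟨√(Gbar g 1 * δ), (2 / Gbar g 1 + 2 * c2 / c3) / δ, by positivity,
    div_pos (add_pos_of_pos_of_nonneg (by positivity) (by positivity)) hδ, ?_⟩
  intro ε hε hεε0 lam _ hlam_nn hlamI hhell
  have hε2 : ε ^ 2 ≤ Gbar g 1 * δ := (le_sqrt hε.le (by positivity)).1 hεε0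
  obtain ⟨hB, hA, hS1⟩ := hellingerSq_lower_bounds hc3.le hgI
    (fun t ht => (hg t (Ioo_subset_Ico_self ht)).1) hG1.le hlamI hl0I
  have hSδ : δ ≤ survF lam 1 := le_of_sq_sqrt_sub_sqrt_le (exp_pos _).le (exp_pos _).le
    (exp_neg_le_survF hl0I hl0_nn (fun t ht => (hlam0 t ht).2) hI01)
    (le_of_mul_le_mul_left (hS1.trans (hhell.trans hε2)) hG1)
  have hK := mul_HSq_le_of_le hδ.le hlamI hl0I (survF_continuousOn hlamI)
    (survF_continuousOn hl0I) hlam_nn hl0_nn (fun t ht => (hlam0 t ht).2)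
    fun t ht => hSδ.trans (survF_antitoneOn hlamI hlam_nn ht hI01 ht.2)
  calc HSq lam lam0
      ≤ (2 * HSq (fun t => lam t * survF lam t) (fun t => lam0 t * survF lam0 t) +
          2 * c2 * HSq (survF lam) (survF lam0)) / δ := (le_div_iff₀' hδ).2 hK
    _ ≤ (2 * (ε ^ 2 / Gbar g 1) + 2 * c2 * (ε ^ 2 / c3)) / δ := by
      gcongr
      · exact (le_div_iff₀' hG1).2 (hA.trans hhell)
      · exact (le_div_iff₀' hc3).2 (hB.trans hhell)
    _ = (2 / Gbar g 1 + 2 * c2 / c3) / δ * ε ^ 2 := by ring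

end
end

section
/- Let 0 < β ≤ 1, D > 0 and λ0 ∈ H(β,D) be bounded. There exists a constant C, depending only on β and D, such that for every integer L ≥ 0 and every bounded λ ∈ V_L (a dyadic histogram constant on each interval I^{L+1}_j): ess sup_{x∈[0,1]} |λ(x) − λ0(x)| ≤ C·(2^L·∫_0^1|λ − λ0| + 2^{−βL}), and the same upper bound (with a possibly different constant) holds with ℓ∞(λ, λ0) in place of the essential supremum norm. -/
open MeasureTheory Real Set

noncomputable section

/-- The Haar mother wavelet `ψ = 1_{(0,1/2]} − 1_{(1/2,1]}`. -/
def haarMother (x : ℝ) : ℝ :=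
  (Set.Ioc (0:ℝ) (1/2)).indicator (fun _ => (1:ℝ)) x
    - (Set.Ioc (1/2:ℝ) 1).indicator (fun _ => (1:ℝ)) x

/-- The Haar wavelet `ψ_{lk}(x) = 2^{l/2} ψ(2^l x − k)`. -/
def haarPsi (l k : ℕ) (x : ℝ) : ℝ :=
  (2:ℝ) ^ ((l:ℝ) / 2) * haarMother ((2:ℝ) ^ l * x - k)

/-- The dyadic interval `I^l_k = (k 2^{−l}, (k+1) 2^{−l}]`. -/
def dyadicI (l k : ℕ) : Set ℝ := Set.Ioc ((k:ℝ) / 2 ^ l) (((k:ℝ) + 1) / 2 ^ l)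

/-- `f ∈ V_L`: `f` is constant on each dyadic interval `I^{L+1}_j`, `0 ≤ j < 2^{L+1}`. -/
def MemV (L : ℕ) (f : ℝ → ℝ) : Prop :=
  ∀ j < 2 ^ (L + 1), ∀ x ∈ dyadicI (L + 1) j, ∀ y ∈ dyadicI (L + 1) j, f x = f y

/-- The `L²`-orthogonal projection onto `V_L`: on each dyadic interval `I^{L+1}_j`,
`(P_L f)(x)` is the average `2^{L+1} ∫_{I^{L+1}_j} f`. -/
def dyadicProj (L : ℕ) (f : ℝ → ℝ) (x : ℝ) : ℝ :=
  (2:ℝ) ^ (L + 1) *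
    ∫ t in (((⌈(2:ℝ) ^ (L + 1) * x⌉ - 1 : ℤ) : ℝ) / 2 ^ (L + 1))..
        (((⌈(2:ℝ) ^ (L + 1) * x⌉ : ℤ) : ℝ) / 2 ^ (L + 1)), f t

/-- The multiscale metric
`ℓ∞(f,g) = |⟨f−g, φ⟩| + Σ_{l≥0} 2^{l/2} max_{0≤k<2^l} |⟨f−g, ψ_{lk}⟩|`. -/
def ellInfinity (f g : ℝ → ℝ) : ℝ :=
  |∫ x in (0:ℝ)..1, (f x - g x)| +
    ∑' l : ℕ, (2:ℝ) ^ ((l:ℝ) / 2) *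
      ⨆ k : Fin (2 ^ l), |∫ x in (0:ℝ)..1, (f x - g x) * haarPsi l k x|

/-- The Hölder ball `H(β,D)` on `[0,1]` (for `0 < β ≤ 1`). -/
def HolderC (β D : ℝ) (f : ℝ → ℝ) : Prop :=
  ∀ x ∈ Set.Icc (0:ℝ) 1, ∀ y ∈ Set.Icc (0:ℝ) 1, |f x - f y| ≤ D * |x - y| ^ β

/-! On a dyadic cell `I` of length `2^{-(L+1)}` the histogram `λ` is constant while `λ0` moves by
at most `D |I|^β`, so at any point of `I` the error `|λ - λ0|` exceeds its average over `I` by at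
most `D |I|^β`, and that average is at most `2^{L+1} ‖λ - λ0‖₁`. For `ℓ∞`, a Haar coefficient at
level `l` is at most `2^{l/2} ‖λ - λ0‖₁`; at levels `l > L` the histogram is constant on the
support of `ψ_{lk}`, so the coefficient only sees the Hölder oscillation of `λ0` over half a cell,
and the weighted levels decay like `2^{-βl}`, a geometric tail. -/

open Filter Topology

theorem HolderC.continuousOn {β D : ℝ} {f : ℝ → ℝ} (hβ : 0 < β) (hf : HolderC β D f) :
    ContinuousOn f (Icc 0 1) := by
  intro x hx
  rw [ContinuousWithinAt, tendsto_iff_norm_sub_tendsto_zero]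
  have hlim : Tendsto (fun y => D * |y - x| ^ β) (𝓝[Icc 0 1] x) (𝓝 0) := by
    have : Continuous fun y => D * |y - x| ^ β :=
      continuous_const.mul ((continuous_id.sub continuous_const).abs.rpow_const
        fun _ => Or.inr hβ.le)
    simpa [Real.zero_rpow hβ.ne'] using (this.tendsto x).mono_left nhdsWithin_le_nhds
  refine squeeze_zero' (Eventually.of_forall fun _ => norm_nonneg _) ?_ hlim
  filter_upwards [self_mem_nhdsWithin] with y hy using hf y hy x hx

theorem HolderC.integrableOn_Ioc {β D : ℝ} {f : ℝ → ℝ} (hβ : 0 < β) (hf : HolderC β D f) :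
    IntegrableOn f (Ioc 0 1) :=
  (hf.continuousOn hβ).integrableOn_Icc.mono_set Ioc_subset_Icc_self

theorem HolderC.const_nonneg {β D : ℝ} {f : ℝ → ℝ} (hf : HolderC β D f) : 0 ≤ D := by
  simpa using (abs_nonneg _).trans (hf 0 ⟨le_rfl, zero_le_one⟩ 1 ⟨zero_le_one, le_rfl⟩)

theorem mem_dyadicI_iff {n j : ℕ} {x : ℝ} :
    x ∈ dyadicI n j ↔ (j : ℝ) < 2 ^ n * x ∧ 2 ^ n * x ≤ j + 1 := by
  rw [dyadicI, mem_Ioc, div_lt_iff₀ (by positivity), le_div_iff₀ (by positivity),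
    mul_comm x]

theorem dyadicI_subset_Ioc {n j : ℕ} (hj : j < 2 ^ n) : dyadicI n j ⊆ Ioc 0 1 := by
  have : (j : ℝ) + 1 ≤ 2 ^ n := by exact_mod_cast hj
  exact Ioc_subset_Ioc (by positivity) ((div_le_one (by positivity)).2 this)

theorem exists_mem_dyadicI (n : ℕ) {x : ℝ} (hx : x ∈ Ioc 0 1) :
    ∃ j < 2 ^ n, x ∈ dyadicI n j := by
  have hpos : 0 < (2 : ℝ) ^ n * x := mul_pos (by positivity) hx.1
  have hceil_pos : 0 < ⌈(2 : ℝ) ^ n * x⌉₊ := Nat.ceil_pos.2 hpos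
  have hceil_le : ⌈(2 : ℝ) ^ n * x⌉₊ ≤ 2 ^ n :=
    Nat.ceil_le.2 (by simpa using mul_le_of_le_one_right (by positivity : (0 : ℝ) ≤ 2 ^ n) hx.2)
  refine ⟨⌈(2 : ℝ) ^ n * x⌉₊ - 1, by omega, mem_dyadicI_iff.2 ?_⟩
  rw [Nat.cast_sub hceil_pos, Nat.cast_one, sub_add_cancel]
  exact ⟨by linarith [Nat.ceil_lt_add_one hpos.le], Nat.le_ceil _⟩

theorem exists_dyadicI_superset {n l k : ℕ} (hnl : n ≤ l) (hk : k < 2 ^ l) :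
    ∃ j < 2 ^ n, dyadicI l k ⊆ dyadicI n j := by
  set m := 2 ^ (l - n)
  have hml : 2 ^ l = m * 2 ^ n := by rw [← pow_add, Nat.sub_add_cancel hnl]
  refine ⟨k / m, Nat.div_lt_of_lt_mul (hml ▸ hk), fun x hx => ?_⟩
  rw [mem_dyadicI_iff] at hx ⊢
  have hm : (0 : ℝ) < m := by positivity
  have hlow : ((k / m : ℕ) : ℝ) * m ≤ k := by exact_mod_cast Nat.div_mul_le_self k m
  have hupp : (k : ℝ) + 1 ≤ ((k / m : ℕ) + 1 : ℝ) * m := by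
    exact_mod_cast Nat.lt_div_mul_add (by positivity : 0 < m) |>.trans_eq (by ring)
  have hml' : (2 : ℝ) ^ l = m * 2 ^ n := by exact_mod_cast hml
  rw [hml'] at hx
  constructor <;> nlinarith

theorem abs_sub_le_of_mem_dyadicI {n j : ℕ} {x y : ℝ} (hx : x ∈ dyadicI n j)
    (hy : y ∈ dyadicI n j) : |x - y| ≤ ((2 : ℝ) ^ n)⁻¹ := by
  rw [mem_dyadicI_iff] at hx hy
  have h2n : (0 : ℝ) < 2 ^ n := by positivity
  rw [abs_sub_le_iff, ← one_div, le_div_iff₀ h2n, le_div_iff₀ h2n]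
  constructor <;> nlinarith

theorem volume_real_dyadicI (n j : ℕ) : volume.real (dyadicI n j) = ((2 : ℝ) ^ n)⁻¹ := by
  rw [dyadicI, Real.volume_real_Ioc_of_le (by gcongr; linarith)]
  field_simp
  ring

theorem inv_two_pow_rpow (n : ℕ) {β : ℝ} : ((2 : ℝ) ^ n)⁻¹ ^ β = ((2 : ℝ) ^ (-β)) ^ n := by
  rw [Real.inv_rpow (by positivity), ← Real.rpow_pow_comm zero_le_two, Real.rpow_neg zero_le_two,
    inv_pow]

theorem MemV.integrableOn {L : ℕ} {f : ℝ → ℝ} (hf : MemV L f) : IntegrableOn f (Ioc 0 1) := by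
  have hcover : Ioc (0 : ℝ) 1 ⊆ ⋃ j ∈ Finset.range (2 ^ (L + 1)), dyadicI (L + 1) j := by
    intro x hx
    obtain ⟨j, hj, hxj⟩ := exists_mem_dyadicI (L + 1) hx
    exact mem_iUnion₂.2 ⟨j, Finset.mem_range.2 hj, hxj⟩
  refine IntegrableOn.mono_set (integrableOn_finset_iUnion.2 fun j hj => ?_) hcover
  obtain ⟨x, hx⟩ : (dyadicI (L + 1) j).Nonempty :=
    nonempty_Ioc.2 (div_lt_div_of_pos_right (lt_add_one _) (by positivity))
  refine (integrableOn_const measure_Ioc_lt_top.ne (C := f x)).congr_fun (fun y hy => ?_)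
    measurableSet_Ioc
  exact hf j (Finset.mem_range.1 hj) x hx y hy

theorem MemV.eq_of_mem_dyadicI {L l k : ℕ} {f : ℝ → ℝ} (hf : MemV L f) (hl : L + 1 ≤ l)
    (hk : k < 2 ^ l) {x y : ℝ} (hx : x ∈ dyadicI l k) (hy : y ∈ dyadicI l k) : f x = f y := by
  obtain ⟨j, hj, hsub⟩ := exists_dyadicI_superset hl hk
  exact hf j hj x (hsub hx) y (hsub hy)

theorem abs_sub_le_of_memV {β D : ℝ} {f g : ℝ → ℝ} {L : ℕ} (hβ : 0 < β) (hf : MemV L f)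
    (hg : HolderC β D g) {x : ℝ} (hx : x ∈ Ioc 0 1) :
    |f x - g x| ≤ 2 ^ (L + 1) * (∫ t in (0:ℝ)..1, |f t - g t|)
      + D * ((2 : ℝ) ^ (-β)) ^ (L + 1) := by
  obtain ⟨j, hj, hxj⟩ := exists_mem_dyadicI (L + 1) hx
  have hsub := dyadicI_subset_Ioc hj
  have hint : IntegrableOn (fun t => |f t - g t|) (Ioc 0 1) :=
    (hf.integrableOn.sub (hg.integrableOn_Ioc hβ)).abs
  have hpoint : ∀ y ∈ dyadicI (L + 1) j,
      |f x - g x| - D * ((2 : ℝ) ^ (-β)) ^ (L + 1) ≤ |f y - g y| := by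
    intro y hy
    have hxy : |g y - g x| ≤ D * ((2 : ℝ) ^ (-β)) ^ (L + 1) := by
      rw [← inv_two_pow_rpow]
      calc |g y - g x| ≤ D * |y - x| ^ β :=
            hg y ⟨(hsub hy).1.le, (hsub hy).2⟩ x ⟨hx.1.le, hx.2⟩
        _ ≤ D * ((2 : ℝ) ^ (L + 1))⁻¹ ^ β := by
          have := hg.const_nonneg
          gcongr
          exact abs_sub_le_of_mem_dyadicI hy hxj
    rw [hf j hj x hxj y hy]
    linarith [abs_sub_le (f y) (g y) (g x)]
  have havg := setIntegral_ge_of_const_le (s := dyadicI (L + 1) j) measurableSet_Ioc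
    measure_Ioc_lt_top.ne hpoint (hint.mono_set hsub)
  have hmono : ∫ t in dyadicI (L + 1) j, |f t - g t| ≤ ∫ t in (0:ℝ)..1, |f t - g t| := by
    rw [intervalIntegral.integral_of_le zero_le_one]
    exact setIntegral_mono_set hint (ae_of_all _ fun _ => abs_nonneg _) hsub.eventuallyLE
  rw [volume_real_dyadicI, smul_eq_mul] at havg
  linarith [(inv_mul_le_iff₀ (by positivity)).1 (havg.trans hmono)]

theorem essSup_abs_sub_le_of_memV {β D : ℝ} {f g : ℝ → ℝ} {L : ℕ} (hβ : 0 < β)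
    (hf : MemV L f) (hg : HolderC β D g) :
    essSup (fun x => |f x - g x|) (volume.restrict (Ioc 0 1))
      ≤ 2 ^ (L + 1) * (∫ t in (0:ℝ)..1, |f t - g t|) + D * ((2 : ℝ) ^ (-β)) ^ (L + 1) := by
  have : (ae (volume.restrict (Ioc (0 : ℝ) 1))).NeBot := ae_restrict_neBot.2 (by simp)
  exact essSup_le_of_ae_le _
    ((ae_restrict_iff' measurableSet_Ioc).2
      (ae_of_all _ fun x hx => abs_sub_le_of_memV hβ hf hg hx))
    (isCoboundedUnder_le_of_le _ fun _ => abs_nonneg _)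

theorem affine_mem_Ioc_iff {a b p q x : ℝ} (ha : 0 < a) :
    a * x - b ∈ Ioc p q ↔ x ∈ Ioc ((b + p) / a) ((b + q) / a) := by
  simp only [mem_Ioc, div_lt_iff₀ ha, le_div_iff₀ ha]
  constructor <;> rintro ⟨h₁, h₂⟩ <;> constructor <;> linarith

theorem haarPsi_eq_indicator (l k : ℕ) (x : ℝ) :
    haarPsi l k x = 2 ^ ((l : ℝ) / 2) *
      ((Ioc ((k : ℝ) / 2 ^ l) ((k + 1 / 2) / 2 ^ l)).indicator 1 x
        - (Ioc ((k + 1 / 2 : ℝ) / 2 ^ l) ((k + 1) / 2 ^ l)).indicator 1 x) := by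
  have h2l : (0 : ℝ) < 2 ^ l := by positivity
  simp only [haarPsi, haarMother, indicator_apply, affine_mem_Ioc_iff h2l, add_zero,
    Pi.one_apply]

theorem abs_haarPsi_le (l k : ℕ) (x : ℝ) : |haarPsi l k x| ≤ 2 ^ ((l : ℝ) / 2) := by
  rw [haarPsi_eq_indicator, abs_mul, abs_of_pos (by positivity)]
  refine mul_le_of_le_one_right (by positivity) ?_
  simp only [indicator_apply, Pi.one_apply]
  split_ifs <;> norm_num

theorem abs_integral_mul_haarPsi_le {g : ℝ → ℝ} (hg : IntegrableOn g (Ioc 0 1)) (l k : ℕ) :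
    |∫ x in (0:ℝ)..1, g x * haarPsi l k x| ≤ 2 ^ ((l : ℝ) / 2) * ∫ x in (0:ℝ)..1, |g x| := by
  rw [← Real.norm_eq_abs, ← intervalIntegral.integral_const_mul]
  refine intervalIntegral.norm_integral_le_of_norm_le zero_le_one (ae_of_all _ fun x _ => ?_) ?_
  · rw [Real.norm_eq_abs, abs_mul, mul_comm]
    exact mul_le_mul_of_nonneg_right (abs_haarPsi_le l k x) (abs_nonneg _)
  · exact ((intervalIntegrable_iff_integrableOn_Ioc_of_le zero_le_one).2 hg.abs).const_mul _

theorem integral_mul_haarPsi {g : ℝ → ℝ} (hg : IntegrableOn g (Ioc 0 1)) {l k : ℕ}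
    (hk : k < 2 ^ l) :
    ∫ x in (0:ℝ)..1, g x * haarPsi l k x = 2 ^ ((l : ℝ) / 2) *
      ∫ x in (k / 2 ^ l : ℝ)..(k / 2 ^ l + ((2 : ℝ) ^ (l + 1))⁻¹),
        (g x - g (x + ((2 : ℝ) ^ (l + 1))⁻¹)) := by
  set c : ℝ := k / 2 ^ l
  set h : ℝ := ((2 : ℝ) ^ (l + 1))⁻¹
  have hh : 0 < h := by positivity
  have hmid : ((k : ℝ) + 1 / 2) / 2 ^ l = c + h := by simp only [c, h]; field_simp; ring
  have hend : ((k : ℝ) + 1) / 2 ^ l = c + h + h := by simp only [c, h]; field_simp; ring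
  have hcell : Ioc c (c + h + h) ⊆ Ioc 0 1 := hend ▸ dyadicI_subset_Ioc hk
  have hleft : Ioc c (c + h) ⊆ Ioc 0 1 :=
    (Ioc_subset_Ioc_right (by linarith)).trans hcell
  have hright : Ioc (c + h) (c + h + h) ⊆ Ioc 0 1 :=
    (Ioc_subset_Ioc_left (by linarith)).trans hcell
  have hsplit : ∀ x, g x * haarPsi l k x = 2 ^ ((l : ℝ) / 2) *
      ((Ioc c (c + h)).indicator g x - (Ioc (c + h) (c + h + h)).indicator g x) := by
    intro x
    rw [haarPsi_eq_indicator, hmid, hend]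
    simp only [indicator_apply, Pi.one_apply]
    split_ifs <;> ring
  have hgl : IntervalIntegrable g volume c (c + h) :=
    (intervalIntegrable_iff_integrableOn_Ioc_of_le (by linarith)).2 (hg.mono_set hleft)
  have hgr : IntervalIntegrable (fun x => g (x + h)) volume c (c + h) := by
    simpa using ((intervalIntegrable_iff_integrableOn_Ioc_of_le (by linarith)).2
      (hg.mono_set hright)).comp_add_right h
  rw [intervalIntegral.integral_of_le zero_le_one]
  simp_rw [hsplit]
  rw [integral_const_mul, integral_sub
      ((hg.mono_set hleft).integrable_indicator measurableSet_Ioc).integrableOn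
      ((hg.mono_set hright).integrable_indicator measurableSet_Ioc).integrableOn,
    setIntegral_indicator measurableSet_Ioc, setIntegral_indicator measurableSet_Ioc,
    inter_eq_self_of_subset_right hleft, inter_eq_self_of_subset_right hright,
    ← intervalIntegral.integral_of_le (by linarith),
    ← intervalIntegral.integral_of_le (by linarith), intervalIntegral.integral_sub hgl hgr, intervalIntegral.integral_comp_add_right]

theorem abs_integral_mul_haarPsi_le_of_memV {β D : ℝ} {f g : ℝ → ℝ} {L l k : ℕ} (hβ : 0 < β)
    (hf : MemV L f) (hg : HolderC β D g) (hl : L + 1 ≤ l) (hk : k < 2 ^ l) :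
    |∫ x in (0:ℝ)..1, (f x - g x) * haarPsi l k x|
      ≤ 2 ^ ((l : ℝ) / 2) * (D * ((2 : ℝ) ^ (-β)) ^ (l + 1) * ((2 : ℝ) ^ (l + 1))⁻¹) := by
  rw [integral_mul_haarPsi (g := fun x => f x - g x)
    (hf.integrableOn.sub (hg.integrableOn_Ioc hβ)) hk, abs_mul,
    abs_of_pos (by positivity)]
  gcongr
  set c : ℝ := k / 2 ^ l
  set h : ℝ := ((2 : ℝ) ^ (l + 1))⁻¹
  have hh : 0 < h := by positivity
  have hcell : dyadicI l k = Ioc c (c + h + h) := by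
    rw [dyadicI]; congr 1; simp only [c, h]; field_simp; ring
  have hsub := dyadicI_subset_Ioc hk
  have hbound : ∀ x ∈ uIoc c (c + h),
      ‖(f x - g x) - (f (x + h) - g (x + h))‖ ≤ D * ((2 : ℝ) ^ (-β)) ^ (l + 1) := by
    intro x hx
    rw [uIoc_of_le (by linarith)] at hx
    have hx' : x ∈ dyadicI l k := hcell ▸ ⟨hx.1, by linarith [hx.2]⟩
    have hxh : x + h ∈ dyadicI l k := hcell ▸ ⟨by linarith [hx.1], by linarith [hx.2]⟩
    rw [hf.eq_of_mem_dyadicI hl hk hx' hxh, sub_sub_sub_cancel_left, Real.norm_eq_abs,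
      ← inv_two_pow_rpow]
    simpa [abs_of_pos hh] using
      hg (x + h) ⟨(hsub hxh).1.le, (hsub hxh).2⟩ x ⟨(hsub hx').1.le, (hsub hx').2⟩
  simpa [abs_of_pos hh] using intervalIntegral.norm_integral_le_of_norm_le_const hbound

theorem tsum_le_sum_add_of_le_geometric {a : ℕ → ℝ} (ha : ∀ l, 0 ≤ a l) {B r : ℝ}
    (hr₀ : 0 ≤ r) (hr₁ : r < 1) (n : ℕ) (htail : ∀ l, n ≤ l → a l ≤ B * r ^ l) :
    ∑' l, a l ≤ ∑ l ∈ Finset.range n, a l + B * r ^ n / (1 - r) := by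
  have hgeom : Summable fun i => B * r ^ n * r ^ i :=
    (summable_geometric_of_lt_one hr₀ hr₁).mul_left _
  have hshift : ∀ i, a (i + n) ≤ B * r ^ n * r ^ i := fun i =>
    (htail _ (Nat.le_add_left n i)).trans_eq (by ring)
  have hsum : Summable fun i => a (i + n) := hgeom.of_nonneg_of_le (fun i => ha _) hshift
  rw [← ((summable_nat_add_iff n).1 hsum).sum_add_tsum_nat_add n]
  gcongr
  calc ∑' i, a (i + n) ≤ ∑' i, B * r ^ n * r ^ i := hsum.tsum_le_tsum hshift hgeom
    _ = B * r ^ n / (1 - r) := by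
      rw [tsum_mul_left, tsum_geometric_of_lt_one hr₀ hr₁, div_eq_mul_inv]

theorem rpow_mul_iSup_abs_integral_mul_haarPsi_le {g : ℝ → ℝ} {l : ℕ} {X : ℝ} (hX : 0 ≤ X)
    (hcoeff : ∀ k < 2 ^ l, |∫ x in (0:ℝ)..1, g x * haarPsi l k x| ≤ 2 ^ ((l : ℝ) / 2) * X) :
    2 ^ ((l : ℝ) / 2) * ⨆ k : Fin (2 ^ l), |∫ x in (0:ℝ)..1, g x * haarPsi l k x| ≤ 2 ^ l * X :=
  calc 2 ^ ((l : ℝ) / 2) * ⨆ k : Fin (2 ^ l), |∫ x in (0:ℝ)..1, g x * haarPsi l k x|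
      ≤ 2 ^ ((l : ℝ) / 2) * (2 ^ ((l : ℝ) / 2) * X) := by
        gcongr
        exact Real.iSup_le (fun k => hcoeff k k.isLt) (by positivity)
    _ = 2 ^ l * X := by
        rw [← mul_assoc, ← Real.rpow_add zero_lt_two, add_halves, Real.rpow_natCast]

theorem ellInfinity_le_of_memV {β D : ℝ} {f g : ℝ → ℝ} {L : ℕ} (hβ : 0 < β)
    (hf : MemV L f) (hg : HolderC β D g) :
    ellInfinity f g
      ≤ 2 ^ (L + 1) * (∫ t in (0:ℝ)..1, |f t - g t|)
        + D * ((2 : ℝ) ^ (-β)) ^ (L + 1) / (1 - (2 : ℝ) ^ (-β)) := by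
  set ρ : ℝ := (2 : ℝ) ^ (-β)
  set N := ∫ t in (0:ℝ)..1, |f t - g t|
  have hρ₀ : 0 < ρ := by positivity
  have hρ₁ : ρ < 1 := Real.rpow_lt_one_of_one_lt_of_neg one_lt_two (neg_neg_of_pos hβ)
  have hN : 0 ≤ N := intervalIntegral.integral_nonneg zero_le_one fun _ _ => abs_nonneg _
  have hD := hg.const_nonneg
  set level : ℕ → ℝ := fun l => 2 ^ ((l : ℝ) / 2) *
    ⨆ k : Fin (2 ^ l), |∫ x in (0:ℝ)..1, (f x - g x) * haarPsi l k x|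
  have hlevel : ∀ l, 0 ≤ level l := fun l =>
    mul_nonneg (by positivity) (Real.iSup_nonneg fun _ => abs_nonneg _)
  have hlow : ∀ l, level l ≤ 2 ^ l * N := fun l =>
    rpow_mul_iSup_abs_integral_mul_haarPsi_le hN fun k _ =>
      abs_integral_mul_haarPsi_le (hf.integrableOn.sub (hg.integrableOn_Ioc hβ)) l k
  have hhigh : ∀ l, L + 1 ≤ l → level l ≤ D * ρ ^ l := by
    intro l hl
    refine (rpow_mul_iSup_abs_integral_mul_haarPsi_le (by positivity) fun k hk =>
      abs_integral_mul_haarPsi_le_of_memV hβ hf hg hl hk).trans ?_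
    calc (2 : ℝ) ^ l * (D * ρ ^ (l + 1) * ((2 : ℝ) ^ (l + 1))⁻¹) = D * ρ ^ l * (ρ / 2) := by
          rw [pow_succ, pow_succ]; field_simp
      _ ≤ D * ρ ^ l * 1 := by gcongr; linarith
      _ = D * ρ ^ l := mul_one _
  have htail := tsum_le_sum_add_of_le_geometric hlevel hρ₀.le hρ₁ (L + 1) hhigh
  have hhead : ∑ l ∈ Finset.range (L + 1), level l ≤ (2 ^ (L + 1) - 1) * N :=
    (Finset.sum_le_sum fun l _ => hlow l).trans_eq <| by
      rw [← Finset.sum_mul, geom_sum_eq (by norm_num : (2 : ℝ) ≠ 1)]; norm_num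
  have hmean : |∫ x in (0:ℝ)..1, (f x - g x)| ≤ N :=
    intervalIntegral.abs_integral_le_integral_abs zero_le_one
  change |∫ x in (0:ℝ)..1, (f x - g x)| + ∑' l, level l ≤ _
  linarith

theorem sup_norm_bound_from_L1_general
    (β D : ℝ) (hβ : 0 < β) (hD : 0 < D) :
    ∃ C : ℝ, 0 < C ∧
      ∀ lam0 : ℝ → ℝ, HolderC β D lam0 →
      ∀ L : ℕ, ∀ lam : ℝ → ℝ, Measurable lam → MemV L lam →
        essSup (fun x => |lam x - lam0 x|) (volume.restrict (Set.Ioc (0:ℝ) 1))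
            ≤ C * ((2:ℝ) ^ L * (∫ x in (0:ℝ)..1, |lam x - lam0 x|)
                + (2:ℝ) ^ (-(β * (L:ℝ)))) ∧
        ellInfinity lam lam0
            ≤ C * ((2:ℝ) ^ L * (∫ x in (0:ℝ)..1, |lam x - lam0 x|)
                + (2:ℝ) ^ (-(β * (L:ℝ)))) := by
  set ρ : ℝ := (2 : ℝ) ^ (-β)
  have hρ₀ : 0 < ρ := by positivity
  have hρ₁ : 0 < 1 - ρ :=
    sub_pos.2 (Real.rpow_lt_one_of_one_lt_of_neg one_lt_two (neg_neg_of_pos hβ))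
  refine ⟨2 + D / (1 - ρ), by positivity, fun lam0 h0 L lam _ hV => ?_⟩
  set N := ∫ x in (0:ℝ)..1, |lam x - lam0 x|
  have hN : 0 ≤ N := intervalIntegral.integral_nonneg zero_le_one fun _ _ => abs_nonneg _
  have hρL : (2 : ℝ) ^ (-(β * L)) = ρ ^ L := by
    rw [neg_mul_eq_neg_mul, Real.rpow_mul zero_le_two, Real.rpow_natCast]
  have hfinal : 2 ^ (L + 1) * N + D * ρ ^ (L + 1) / (1 - ρ)
      ≤ (2 + D / (1 - ρ)) * (2 ^ L * N + (2 : ℝ) ^ (-(β * L))) := by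
    have : D * ρ ^ (L + 1) / (1 - ρ) ≤ D / (1 - ρ) * ρ ^ L := by
      rw [div_mul_eq_mul_div]
      gcongr D * ?_ / _
      exact pow_le_pow_of_le_one hρ₀.le (by linarith) L.le_succ
    rw [hρL, pow_succ]
    nlinarith [mul_nonneg (div_nonneg hD.le hρ₁.le) (mul_nonneg (pow_nonneg two_pos.le L) hN),
      pow_nonneg hρ₀.le L]
  have hess : D * ρ ^ (L + 1) ≤ D * ρ ^ (L + 1) / (1 - ρ) :=
    le_div_self (by positivity) hρ₁ (by linarith)
  exact ⟨(essSup_abs_sub_le_of_memV hβ hV h0).trans (by linarith),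
    (ellInfinity_le_of_memV hβ hV h0).trans hfinal⟩

/-- Supremum-norm bound for histograms close to a Hölder function in `L¹`:
for `λ0 ∈ H(β,D)` (`0 < β ≤ 1`) and any dyadic histogram `λ ∈ V_L`,
`‖λ − λ0‖_∞ ≲ 2^L ‖λ − λ0‖_1 + 2^{−βL}`, both for the essential supremum on `[0,1]` and for
the multiscale metric `ℓ∞`. -/
theorem sup_norm_bound_from_L1
    (β D : ℝ) (hβ : 0 < β) (hβ1 : β ≤ 1) (hD : 0 < D) :
    ∃ C : ℝ, 0 < C ∧
      ∀ lam0 : ℝ → ℝ, HolderC β D lam0 →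
      ∀ L : ℕ, ∀ lam : ℝ → ℝ, Measurable lam → MemV L lam →
        essSup (fun x => |lam x - lam0 x|) (volume.restrict (Set.Ioc (0:ℝ) 1))
            ≤ C * ((2:ℝ) ^ L * (∫ x in (0:ℝ)..1, |lam x - lam0 x|)
                + (2:ℝ) ^ (-(β * (L:ℝ)))) ∧
        ellInfinity lam lam0
            ≤ C * ((2:ℝ) ^ L * (∫ x in (0:ℝ)..1, |lam x - lam0 x|)
                + (2:ℝ) ^ (-(β * (L:ℝ)))) :=
  sup_norm_bound_from_L1_general β D hβ hD
end
end

section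
/- Let L_n ≥ L ≥ 0 be integers and 0 ≤ K < 2^L, and for 0 ≤ j < 2^{L_n+1} let H_j = 2^{L_n+1}·∫_{I^{L_n+1}_j} ψ_{LK}(x)/M0(x) dx (the heights of the histogram P_{L_n}(ψ_{LK}/M0)). Then there exists C = C(m, C0) such that Σ_{j=1}^{2^{L_n+1}−1} |H_j − H_{j−1}| ≤ C·2^{L/2}. -/
open MeasureTheory Real Set

noncomputable section

/-!
On a dyadic interval of level `L + s + 1` the wavelet `ψ_{LK}` is constant, so
`H_j = c_j a_j` with `c_j = 2^{L/2} · (±1 or 0)` and `a_j` the average of `1/M0` there.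
The discrete Leibniz rule `Δ(c a) = (Δc) a + c_{j-1} Δa` bounds the variation by
`sup |a| · TV(c) ≤ 4 · 2^{L/2} / m` plus `sup |c| · Σ |Δa|`, where
`|Δa| ≤ C0 2^{-(L+s+1)}` since `1/M0` is Lipschitz, and only the `2^{s+1}` indices in the
support of `c` contribute. Hence `C = 4/m + max C0 0` works.
-/

open scoped NNReal

def variation (f : ℕ → ℝ) (n : ℕ) : ℝ := ∑ j ∈ Finset.Ico 1 n, |f j - f (j - 1)|

section Variation

open Finset

lemma variation_sub_le (f g : ℕ → ℝ) (n : ℕ) :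
    variation (fun j => f j - g j) n ≤ variation f n + variation g n := by
  unfold variation
  rw [← sum_add_distrib]
  exact sum_le_sum fun j _ => by
    rw [show f j - g j - (f (j - 1) - g (j - 1)) = (f j - f (j - 1)) - (g j - g (j - 1)) by ring]
    exact abs_sub _ _

lemma variation_indicator_Ico_le (u v n : ℕ) :
    variation ((Set.Ico u v).indicator 1) n ≤ 2 := by
  have hjump : ∀ j ∈ Finset.Ico 1 n, |(Set.Ico u v).indicator (1 : ℕ → ℝ) j
      - (Set.Ico u v).indicator 1 (j - 1)|
        ≤ (if j = u then 1 else 0) + (if j = v then 1 else 0) := by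
    intro j hj
    have hj1 : 1 ≤ j := (Finset.mem_Ico.mp hj).1
    simp only [Set.indicator, Set.mem_Ico, Pi.one_apply]
    split_ifs <;> first | omega | norm_num
  calc variation _ n
      ≤ ∑ j ∈ Finset.Ico 1 n, ((if j = u then 1 else 0) + (if j = v then (1 : ℝ) else 0)) :=
        sum_le_sum hjump
    _ ≤ 1 + 1 := by
        rw [sum_add_distrib, sum_ite_eq', sum_ite_eq']
        gcongr <;> split_ifs <;> norm_num
    _ = 2 := by norm_num

lemma sum_indicator_Ico_le (S : Finset ℕ) (u v : ℕ) :
    ∑ j ∈ S, (Set.Ico u v).indicator (1 : ℕ → ℝ) j ≤ (v - u : ℕ) := by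
  simp only [Set.indicator_apply, Pi.one_apply, sum_boole]
  rw [← Nat.card_Ico]
  exact_mod_cast Finset.card_le_card fun j hj => by simpa using (mem_filter.mp hj).2

lemma variation_mul_le {c a : ℕ → ℝ} {n : ℕ} {B δ : ℝ}
    (ha : ∀ j ∈ Finset.Ico 1 n, |a j| ≤ B)
    (hda : ∀ j ∈ Finset.Ico 1 n, |a j - a (j - 1)| ≤ δ) :
    variation (fun j => c j * a j) n
      ≤ B * variation c n + δ * ∑ j ∈ range (n - 1), |c j| := by
  have hshift : ∑ j ∈ Finset.Ico 1 n, |c (j - 1)| = ∑ j ∈ range (n - 1), |c j| := by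
    rw [sum_Ico_eq_sum_range]
    simp only [Nat.add_sub_cancel_left]
  unfold variation
  rw [← hshift, mul_sum, mul_sum, ← sum_add_distrib]
  refine sum_le_sum fun j hj => ?_
  calc |c j * a j - c (j - 1) * a (j - 1)|
      = |(c j - c (j - 1)) * a j + c (j - 1) * (a j - a (j - 1))| := by ring_nf
    _ ≤ |c j - c (j - 1)| * |a j| + |c (j - 1)| * |a j - a (j - 1)| := by
        rw [← abs_mul, ← abs_mul]; exact abs_add_le _ _
    _ ≤ B * |c j - c (j - 1)| + δ * |c (j - 1)| := by
        rw [mul_comm B, mul_comm δ]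
        gcongr
        exacts [ha j hj, hda j hj]

end Variation

def discreteHaar (s K j : ℕ) : ℝ :=
  (Set.Ico (K * 2 ^ (s + 1)) (K * 2 ^ (s + 1) + 2 ^ s)).indicator 1 j
    - (Set.Ico (K * 2 ^ (s + 1) + 2 ^ s) (K * 2 ^ (s + 1) + 2 ^ s + 2 ^ s)).indicator 1 j

lemma variation_discreteHaar_le (s K n : ℕ) : variation (discreteHaar s K) n ≤ 4 :=
  calc variation (discreteHaar s K) n
      ≤ variation ((Set.Ico (K * 2 ^ (s + 1)) (K * 2 ^ (s + 1) + 2 ^ s)).indicator 1) n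
        + variation ((Set.Ico (K * 2 ^ (s + 1) + 2 ^ s)
            (K * 2 ^ (s + 1) + 2 ^ s + 2 ^ s)).indicator 1) n :=
        variation_sub_le _ _ n
    _ ≤ 2 + 2 := add_le_add (variation_indicator_Ico_le _ _ n) (variation_indicator_Ico_le _ _ n)
    _ = 4 := by norm_num

lemma sum_abs_discreteHaar_le (S : Finset ℕ) (s K : ℕ) :
    ∑ j ∈ S, |discreteHaar s K j| ≤ 2 ^ (s + 1) := by
  have h1 := sum_indicator_Ico_le S (K * 2 ^ (s + 1)) (K * 2 ^ (s + 1) + 2 ^ s)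
  have h2 := sum_indicator_Ico_le S (K * 2 ^ (s + 1) + 2 ^ s) (K * 2 ^ (s + 1) + 2 ^ s + 2 ^ s)
  simp only [Nat.add_sub_cancel_left, Nat.cast_pow, Nat.cast_ofNat] at h1 h2
  calc ∑ j ∈ S, |discreteHaar s K j|
      ≤ ∑ j ∈ S, ((Set.Ico (K * 2 ^ (s + 1)) (K * 2 ^ (s + 1) + 2 ^ s)).indicator 1 j
          + (Set.Ico (K * 2 ^ (s + 1) + 2 ^ s) (K * 2 ^ (s + 1) + 2 ^ s + 2 ^ s)).indicator
              (1 : ℕ → ℝ) j) := by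
        refine Finset.sum_le_sum fun j _ => (abs_sub _ _).trans_eq ?_
        simp only [Set.indicator_apply, Pi.one_apply]
        split_ifs <;> norm_num
    _ ≤ 2 ^ (s + 1) := by
        rw [Finset.sum_add_distrib]; linarith [show (2 : ℝ) ^ (s + 1) = 2 ^ s + 2 ^ s by ring]

lemma mem_Ioc_natCast_iff {t : ℝ} {j : ℕ} (ht : t ∈ Ioc (j : ℝ) (j + 1)) (u v : ℕ) :
    t ∈ Ioc (u : ℝ) v ↔ j ∈ Ico u v := by
  obtain ⟨h1, h2⟩ := ht
  simp only [mem_Ioc, mem_Ico]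
  constructor
  · rintro ⟨hu, hv⟩
    constructor
    · by_contra! h
      have : (j : ℝ) + 1 ≤ u := by exact_mod_cast h
      linarith
    · by_contra! h
      have : (v : ℝ) ≤ j := by exact_mod_cast h
      linarith
  · rintro ⟨hu, hv⟩
    have hu' : (u : ℝ) ≤ j := by exact_mod_cast hu
    have hv' : (j : ℝ) + 1 ≤ v := by exact_mod_cast hv
    constructor <;> linarith

lemma haarPsi_eq_discreteHaar {L s K j : ℕ} {x : ℝ}
    (hx : x ∈ Ioc ((j : ℝ) / 2 ^ (L + s + 1)) (((j : ℝ) + 1) / 2 ^ (L + s + 1))) :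
    haarPsi L K x = 2 ^ ((L : ℝ) / 2) * discreteHaar s K j := by
  replace hx : (2 : ℝ) ^ (L + s + 1) * x ∈ Ioc (j : ℝ) (j + 1) := by
    rwa [mem_Ioc, div_lt_iff₀' (by positivity), le_div_iff₀' (by positivity)] at hx
  set y := (2 : ℝ) ^ L * x - K
  have ht : (2 : ℝ) ^ (L + s + 1) * x = 2 ^ s * (2 * y + 2 * K) := by
    simp only [y]; ring
  have hpos : (0 : ℝ) < 2 ^ s := by positivity
  have hleft : y ∈ Ioc 0 (1 / 2) ↔ j ∈ Ico (K * 2 ^ (s + 1)) (K * 2 ^ (s + 1) + 2 ^ s) := by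
    rw [← mem_Ioc_natCast_iff hx, ht]
    push_cast
    simp only [mem_Ioc, pow_succ]
    constructor <;> rintro ⟨h1, h2⟩ <;> constructor <;> nlinarith
  have hright : y ∈ Ioc (1 / 2) 1 ↔
      j ∈ Ico (K * 2 ^ (s + 1) + 2 ^ s) (K * 2 ^ (s + 1) + 2 ^ s + 2 ^ s) := by
    rw [← mem_Ioc_natCast_iff hx, ht]
    push_cast
    simp only [mem_Ioc, pow_succ]
    constructor <;> rintro ⟨h1, h2⟩ <;> constructor <;> nlinarith
  change 2 ^ ((L : ℝ) / 2) * haarMother y = _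
  simp only [haarMother, discreteHaar, Set.indicator_apply, hleft, hright, Pi.one_apply]

def dyadicAverage (n : ℕ) (f : ℝ → ℝ) (j : ℕ) : ℝ :=
  (2 : ℝ) ^ n * ∫ x in ((j : ℝ) / 2 ^ n)..(((j : ℝ) + 1) / 2 ^ n), f x

section DyadicAverage

variable {n j : ℕ} {f : ℝ → ℝ}

lemma dyadicAverage_sub_one (hj : 1 ≤ j) :
    dyadicAverage n f (j - 1)
      = 2 ^ n * ∫ x in (((j : ℝ) - 1) / 2 ^ n)..((j : ℝ) / 2 ^ n), f x := by
  rw [dyadicAverage, Nat.cast_sub hj, Nat.cast_one, sub_add_cancel]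

lemma variation_dyadicAverage_eq_sum (n N : ℕ) (f : ℝ → ℝ) :
    variation (dyadicAverage n f) N = ∑ j ∈ Finset.Ico 1 N,
      |((2 : ℝ) ^ n * ∫ x in ((j : ℝ) / 2 ^ n)..(((j : ℝ) + 1) / 2 ^ n), f x)
        - ((2 : ℝ) ^ n * ∫ x in (((j : ℝ) - 1) / 2 ^ n)..((j : ℝ) / 2 ^ n), f x)| :=
  Finset.sum_congr rfl fun j hj => by
    rw [dyadicAverage_sub_one (Finset.mem_Ico.mp hj).1, dyadicAverage]

lemma dyadicAverage_congr_mul {g : ℝ → ℝ} {c : ℝ}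
    (h : ∀ x ∈ Ioc ((j : ℝ) / 2 ^ n) (((j : ℝ) + 1) / 2 ^ n), f x = c * g x) :
    dyadicAverage n f j = c * dyadicAverage n g j := by
  have hle : (j : ℝ) / 2 ^ n ≤ ((j : ℝ) + 1) / 2 ^ n := by gcongr; linarith
  unfold dyadicAverage
  rw [intervalIntegral.integral_congr_ae (Filter.Eventually.of_forall fun x hx =>
    h x (by rwa [uIoc_of_le hle] at hx)), intervalIntegral.integral_const_mul]
  ring

lemma Icc_div_two_pow_subset {a b : ℝ} (ha : 0 ≤ a) (hb : b ≤ 2 ^ n) :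
    Icc (a / 2 ^ n) (b / 2 ^ n) ⊆ Icc 0 1 :=
  Icc_subset_Icc (by positivity) (div_le_one_of_le₀ hb (by positivity))

lemma abs_dyadicAverage_le {B : ℝ} (hf : ∀ x ∈ Icc (0 : ℝ) 1, |f x| ≤ B)
    (hj : j < 2 ^ n) :
    |dyadicAverage n f j| ≤ B := by
  have hj' : (j : ℝ) + 1 ≤ 2 ^ n := by exact_mod_cast hj
  have hle : (j : ℝ) / 2 ^ n ≤ ((j : ℝ) + 1) / 2 ^ n := by gcongr; linarith
  have hint := intervalIntegral.norm_integral_le_of_norm_le_const (f := f) (C := B) fun x hx =>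
    (Real.norm_eq_abs _).trans_le <| hf x <| Icc_div_two_pow_subset (Nat.cast_nonneg j) hj' <|
      Ioc_subset_Icc_self (by rwa [uIoc_of_le hle] at hx)
  rw [abs_of_nonneg (sub_nonneg.mpr hle), ← sub_div, add_sub_cancel_left] at hint
  rw [dyadicAverage, abs_mul, abs_of_pos (by positivity)]
  calc 2 ^ n * |∫ x in ((j : ℝ) / 2 ^ n)..(((j : ℝ) + 1) / 2 ^ n), f x|
      ≤ 2 ^ n * (B * (1 / 2 ^ n)) := by gcongr; exact hint
    _ = B := by field_simp

lemma abs_integral_sub_integral_le_of_lipschitzOnWith {K : ℝ≥0} {a b c : ℝ} (hab : a ≤ b)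
    (hc : c - b = b - a) (hf : LipschitzOnWith K f (Icc a c)) :
    |(∫ x in b..c, f x) - ∫ x in a..b, f x| ≤ K * (b - a) ^ 2 := by
  set h := b - a
  have hh : 0 ≤ h := sub_nonneg.mpr hab
  have hsub : Icc a b ⊆ Icc a c := Icc_subset_Icc_right (by linarith)
  have hshift : MapsTo (· + h) (Icc a b) (Icc a c) := fun x hx =>
    ⟨by linarith [hx.1], by linarith [hx.2]⟩
  have hint : IntervalIntegrable f volume a b :=
    (hf.continuousOn.mono hsub).intervalIntegrable_of_Icc hab
  have hint_shift : IntervalIntegrable (fun x => f (x + h)) volume a b :=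
    (hf.continuousOn.comp (continuousOn_id.add continuousOn_const) hshift).intervalIntegrable_of_Icc
      hab
  rw [show c = b + h by linarith, show ∫ x in b..b + h, f x = ∫ x in a..b, f (x + h) by
    rw [intervalIntegral.integral_comp_add_right, show a + h = b by ring],
    ← intervalIntegral.integral_sub hint_shift hint, ← Real.norm_eq_abs]
  calc ‖∫ x in a..b, (f (x + h) - f x)‖ ≤ K * h * |b - a| :=
        intervalIntegral.norm_integral_le_of_norm_le_const fun x hx => by
          have hx' : x ∈ Icc a b := Ioc_subset_Icc_self (by rwa [uIoc_of_le hab] at hx)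
          simpa [← dist_eq_norm, Real.dist_eq, abs_of_nonneg hh] using
            hf.dist_le_mul _ (hshift hx') _ (hsub hx')
    _ = K * h ^ 2 := by rw [abs_of_nonneg hh]; ring

lemma abs_dyadicAverage_sub_le {K : ℝ≥0} (hf : LipschitzOnWith K f (Icc 0 1)) (hj1 : 1 ≤ j)
    (hj : j < 2 ^ n) :
    |dyadicAverage n f j - dyadicAverage n f (j - 1)| ≤ K / 2 ^ n := by
  have hj' : (j : ℝ) + 1 ≤ 2 ^ n := by exact_mod_cast hj
  have hj1' : (1 : ℝ) ≤ j := by exact_mod_cast hj1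
  have hle : ((j : ℝ) - 1) / 2 ^ n ≤ (j : ℝ) / 2 ^ n := by gcongr; linarith
  have hint := abs_integral_sub_integral_le_of_lipschitzOnWith hle (by ring)
    (hf.mono (Icc_div_two_pow_subset (by linarith) hj'))
  rw [dyadicAverage, dyadicAverage_sub_one hj1, ← mul_sub, abs_mul, abs_of_pos (by positivity)]
  calc 2 ^ n * |(∫ x in ((j : ℝ) / 2 ^ n)..(((j : ℝ) + 1) / 2 ^ n), f x)
        - ∫ x in (((j : ℝ) - 1) / 2 ^ n)..((j : ℝ) / 2 ^ n), f x|
      ≤ 2 ^ n * (K * ((j : ℝ) / 2 ^ n - ((j : ℝ) - 1) / 2 ^ n) ^ 2) := by gcongr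
    _ = K / 2 ^ n := by field_simp; ring

end DyadicAverage

lemma variation_dyadicAverage_haarPsi_mul_le {L s K : ℕ} {g : ℝ → ℝ} {B : ℝ} {C : ℝ≥0}
    (hg : ∀ x ∈ Icc (0 : ℝ) 1, |g x| ≤ B) (hgC : LipschitzOnWith C g (Icc 0 1)) :
    variation (dyadicAverage (L + s + 1) fun x => haarPsi L K x * g x) (2 ^ (L + s + 1))
      ≤ (4 * B + C) * 2 ^ ((L : ℝ) / 2) := by
  set N := L + s + 1
  set P := (2 : ℝ) ^ ((L : ℝ) / 2)
  set a : ℕ → ℝ := fun j => P * dyadicAverage N g j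
  have hB : 0 ≤ B := (abs_nonneg _).trans (hg 0 ⟨le_rfl, zero_le_one⟩)
  have hH : dyadicAverage N (fun x => haarPsi L K x * g x) = fun j => discreteHaar s K j * a j :=
    funext fun j => by
      rw [dyadicAverage_congr_mul (c := P * discreteHaar s K j) (g := g)
        fun x hx => by rw [haarPsi_eq_discreteHaar hx]]
      simp only [a]; ring
  have ha : ∀ j ∈ Finset.Ico 1 (2 ^ N), |a j| ≤ P * B := fun j hj => by
    rw [abs_mul, abs_of_pos (by positivity : 0 < P)]
    exact mul_le_mul_of_nonneg_left (abs_dyadicAverage_le hg (Finset.mem_Ico.mp hj).2)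
      (by positivity)
  have hda : ∀ j ∈ Finset.Ico 1 (2 ^ N), |a j - a (j - 1)| ≤ P * (C / 2 ^ N) := fun j hj => by
    rw [← mul_sub, abs_mul, abs_of_pos (by positivity : 0 < P)]
    exact mul_le_mul_of_nonneg_left (abs_dyadicAverage_sub_le hgC (Finset.mem_Ico.mp hj).1
      (Finset.mem_Ico.mp hj).2) (by positivity)
  rw [hH]
  calc variation (fun j => discreteHaar s K j * a j) (2 ^ N)
      ≤ P * B * variation (discreteHaar s K) (2 ^ N)
        + P * (C / 2 ^ N) * ∑ j ∈ Finset.range (2 ^ N - 1), |discreteHaar s K j| :=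
        variation_mul_le ha hda
    _ ≤ P * B * 4 + P * (C / 2 ^ N) * 2 ^ (s + 1) := by
        gcongr
        exacts [variation_discreteHaar_le s K _, sum_abs_discreteHaar_le _ s K]
    _ = P * B * 4 + P * C / 2 ^ L := by
        rw [show N = L + (s + 1) by ring, pow_add]; field_simp
    _ ≤ P * B * 4 + P * C := by
        gcongr; exact div_le_self (by positivity) (one_le_pow₀ one_le_two)
    _ = (4 * B + C) * P := by ring

theorem histogram_heights_total_variation_general
    (m C0 : ℝ) (hm : 0 < m) :
    ∃ C : ℝ, 0 < C ∧
      ∀ M0 : ℝ → ℝ, Measurable M0 →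
        (∀ u ∈ Set.Icc (0:ℝ) 1, m ≤ M0 u ∧ M0 u ≤ 1) →
        LipschitzOnWith (Real.toNNReal C0) (fun u => 1 / M0 u) (Set.Icc 0 1) →
        ∀ Ln L K : ℕ, L ≤ Ln → K < 2 ^ L →
          (∑ j ∈ Finset.Ico (1:ℕ) (2 ^ (Ln + 1)),
              |((2:ℝ) ^ (Ln + 1) *
                  ∫ x in ((j:ℝ) / 2 ^ (Ln + 1))..(((j:ℝ) + 1) / 2 ^ (Ln + 1)),
                    haarPsi L K x / M0 x)
                - ((2:ℝ) ^ (Ln + 1) *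
                  ∫ x in (((j:ℝ) - 1) / 2 ^ (Ln + 1))..((j:ℝ) / 2 ^ (Ln + 1)),
                    haarPsi L K x / M0 x)|)
            ≤ C * (2:ℝ) ^ ((L:ℝ) / 2) := by
  refine ⟨4 * (1 / m) + Real.toNNReal C0, by positivity, ?_⟩
  intro M0 _ hM0 hLip Ln L K hL _
  obtain ⟨s, rfl⟩ := Nat.exists_eq_add_of_le hL
  have hinv : ∀ u ∈ Icc (0 : ℝ) 1, |1 / M0 u| ≤ 1 / m := fun u hu => by
    rw [abs_of_pos (one_div_pos.mpr (hm.trans_le (hM0 u hu).1))]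
    exact one_div_le_one_div_of_le hm (hM0 u hu).1
  simp only [← variation_dyadicAverage_eq_sum, div_eq_mul_one_div (haarPsi L K _)]
  exact variation_dyadicAverage_haarPsi_mul_le hinv hLip

/-- Total-variation bound for the histogram heights `H_j = 2^{L_n+1} ∫_{I^{L_n+1}_j} ψ_{LK}/M0`
of the projection `P_{L_n}(ψ_{LK}/M0)`: `Σ_{j=1}^{2^{L_n+1}−1} |H_j − H_{j−1}| ≤ C 2^{L/2}`,
with `C` depending only on the lower bound `m` of `M0` and the Lipschitz constant `C0` of
`1/M0`. -/
theorem histogram_heights_total_variation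
    (m C0 : ℝ) (hm : 0 < m) (hC0 : 0 < C0) :
    ∃ C : ℝ, 0 < C ∧
      ∀ M0 : ℝ → ℝ, Measurable M0 →
        (∀ u ∈ Set.Icc (0:ℝ) 1, m ≤ M0 u ∧ M0 u ≤ 1) →
        LipschitzOnWith (Real.toNNReal C0) (fun u => 1 / M0 u) (Set.Icc 0 1) →
        ∀ Ln L K : ℕ, L ≤ Ln → K < 2 ^ L →
          (∑ j ∈ Finset.Ico (1:ℕ) (2 ^ (Ln + 1)),
              |((2:ℝ) ^ (Ln + 1) *
                  ∫ x in ((j:ℝ) / 2 ^ (Ln + 1))..(((j:ℝ) + 1) / 2 ^ (Ln + 1)),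
                    haarPsi L K x / M0 x)
                - ((2:ℝ) ^ (Ln + 1) *
                  ∫ x in (((j:ℝ) - 1) / 2 ^ (Ln + 1))..((j:ℝ) / 2 ^ (Ln + 1)),
                    haarPsi L K x / M0 x)|)
            ≤ C * (2:ℝ) ^ ((L:ℝ) / 2) :=
  histogram_heights_total_variation_general m C0 hm
end
end

section
/- Let 0 < c1 ≤ c2, let λ0 : [0,1] → ℝ be measurable with c1 ≤ λ0 ≤ c2, let M0 : [0,1] → [0,1] be measurable, and let D, d > 0. There exists a constant C = C(c1, c2, D, d) such that: for every integer n ≥ 1, all reals t and μ > 0 with |t|·μ ≤ d·√n, every measurable h : [0,1] → ℝ with ess sup|h| ≤ μ and ∫_0^1 h² ≤ D², every v ≥ 0 and every measurable λ ≥ 0 with ess sup|λ − λ0| ≤ v, one has | n·∫_0^1 M0(u)·λ0(u)·[ (λ(u)/λ0(u))·(exp(−t·h(u)/√n) − 1 + t·h(u)/√n) − t²·h(u)²/(2n) ] du | ≤ C·t²·( v + |t|·μ/√n ). -/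
open MeasureTheory Real Set

/-!
With `x = t·h/√n`, the integrand is `M0·[(λ - λ0)·(e^{-x} - 1 + x) + λ0·(e^{-x} - 1 + x - x²/2)]`.
Taylor's bound `|e^y - ∑_{k<m} y^k/k!| ≤ |y|^m e^{|y|}` with `m = 2, 3` and `|x| ≤ |t|μ/√n ≤ d`
bounds it by `e^d (v + c2·|t|μ/√n)·x²`, and `x² = t²h²/n` integrates to at most `t²D²/n`.
-/

namespace Real

lemma abs_exp_sub_sum_le_abs_mul_exp (x : ℝ) (n : ℕ) :
    |exp x - ∑ m ∈ Finset.range n, x ^ m / m.factorial| ≤ |x| ^ n * exp |x| := by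
  have := Complex.norm_exp_sub_sum_le_norm_mul_exp (x : ℂ) n
  rw [Complex.norm_real, Real.norm_eq_abs] at this
  convert this using 2
  rw [← Real.norm_eq_abs, ← Complex.norm_real]
  push_cast
  rfl

lemma abs_exp_sub_one_sub_id_le_sq_mul_exp (x : ℝ) :
    |exp x - 1 - x| ≤ x ^ 2 * exp |x| := by
  simpa [Finset.sum_range_succ, sub_sub] using abs_exp_sub_sum_le_abs_mul_exp x 2

lemma abs_exp_sub_one_sub_id_sub_sq_div_two_le (x : ℝ) :
    |exp x - 1 - x - x ^ 2 / 2| ≤ |x| ^ 3 * exp |x| := by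
  simpa [Finset.sum_range_succ, sub_sub] using abs_exp_sub_sum_le_abs_mul_exp x 3

end Real

lemma abs_lan_integrand_le {m a b x c v r : ℝ} (hm : |m| ≤ 1) (ha : 0 < a) (hac : a ≤ c)
    (hb : |b - a| ≤ v) (hx : |x| ≤ r) :
    |m * a * (b / a * (exp (-x) - 1 + x) - x ^ 2 / 2)| ≤ (v + c * r) * exp r * x ^ 2 := by
  have hdecomp : m * a * (b / a * (exp (-x) - 1 + x) - x ^ 2 / 2) =
      m * ((b - a) * (exp (-x) - 1 - -x) + a * (exp (-x) - 1 - -x - (-x) ^ 2 / 2)) := by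
    field_simp
    ring
  have hexp : exp |-x| ≤ exp r := by rwa [abs_neg, exp_le_exp]
  have hquad : |exp (-x) - 1 - -x| ≤ x ^ 2 * exp r := calc
    _ ≤ (-x) ^ 2 * exp |-x| := abs_exp_sub_one_sub_id_le_sq_mul_exp (-x)
    _ ≤ x ^ 2 * exp r := by rw [neg_sq]; gcongr
  have hr : 0 ≤ r := (abs_nonneg x).trans hx
  have hcubic : |exp (-x) - 1 - -x - (-x) ^ 2 / 2| ≤ r * x ^ 2 * exp r := calc
    _ ≤ |-x| ^ 3 * exp |-x| := abs_exp_sub_one_sub_id_sub_sq_div_two_le (-x)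
    _ = |x| * x ^ 2 * exp |-x| := by rw [abs_neg, pow_succ', sq_abs]
    _ ≤ r * x ^ 2 * exp r := by gcongr
  have hv : 0 ≤ v := (abs_nonneg _).trans hb
  have hc : 0 ≤ c := ha.le.trans hac
  calc _ = |m| * |(b - a) * (exp (-x) - 1 - -x) + a * (exp (-x) - 1 - -x - (-x) ^ 2 / 2)| := by
        rw [hdecomp, abs_mul]
    _ ≤ 1 * (|b - a| * |exp (-x) - 1 - -x| + a * |exp (-x) - 1 - -x - (-x) ^ 2 / 2|) := by
        gcongr
        refine (abs_add_le _ _).trans ?_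
        rw [abs_mul, abs_mul, abs_of_pos ha]
    _ ≤ 1 * (v * (x ^ 2 * exp r) + c * (r * x ^ 2 * exp r)) := by gcongr
    _ = (v + c * r) * exp r * x ^ 2 := by ring

lemma abs_lan_integrand_scaled_le {m a b c v t y s r : ℝ} (hs : 0 < s) (hm : |m| ≤ 1)
    (ha : 0 < a) (hac : a ≤ c) (hb : |b - a| ≤ v) (hty : |t| * |y| / √s ≤ r) :
    |m * a * (b / a * (exp (-(t * y / √s)) - 1 + t * y / √s) - t ^ 2 * y ^ 2 / (2 * s))|
      ≤ (v + c * r) * exp r * (t ^ 2 / s) * y ^ 2 := by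
  have hsq : (t * y / √s) ^ 2 = t ^ 2 / s * y ^ 2 := by
    rw [div_pow, sq_sqrt hs.le]; ring
  rw [show t ^ 2 * y ^ 2 / (2 * s) = (t * y / √s) ^ 2 / 2 by rw [hsq]; ring,
    mul_assoc _ (t ^ 2 / s), ← hsq]
  refine abs_lan_integrand_le hm ha hac hb ?_
  rwa [abs_div, abs_mul, abs_of_pos (sqrt_pos.2 hs)]

lemma abs_intervalIntegral_le_mul_of_ae_abs_le_mul_sq {f h : ℝ → ℝ} {a b K μ B : ℝ}
    (hab : a ≤ b) (hK : 0 ≤ K) (hh : Measurable h)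
    (hhμ : ∀ᵐ u ∂volume.restrict (Ioc a b), |h u| ≤ μ) (hL2 : ∫ u in a..b, h u ^ 2 ≤ B)
    (hf : ∀ᵐ u ∂volume.restrict (Ioc a b), |f u| ≤ K * h u ^ 2) :
    |∫ u in a..b, f u| ≤ K * B := by
  have hint : IntervalIntegrable (fun u => h u ^ 2) volume a b := by
    rw [intervalIntegrable_iff_integrableOn_Ioc_of_le hab]
    refine Measure.integrableOn_of_bounded (M := μ ^ 2) measure_Ioc_lt_top.ne
      (hh.pow_const 2).aestronglyMeasurable ?_
    filter_upwards [hhμ] with u hu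
    simpa [sq_abs] using pow_le_pow_left₀ (abs_nonneg _) hu 2
  simp_rw [← Real.norm_eq_abs] at hf ⊢
  calc ‖∫ u in a..b, f u‖ ≤ ∫ u in a..b, K * h u ^ 2 :=
        intervalIntegral.norm_integral_le_of_norm_le hab
          ((ae_restrict_iff' measurableSet_Ioc).1 hf) (hint.const_mul K)
    _ = K * ∫ u in a..b, h u ^ 2 := intervalIntegral.integral_const_mul K _
    _ ≤ K * B := by gcongr

theorem lan_remainder_bound_sup_general
    (c1 c2 D d : ℝ) (hc1 : 0 < c1) (hc12 : c1 ≤ c2) (hD : 0 < D) :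
    ∃ C : ℝ, 0 < C ∧
      ∀ lam0 M0 : ℝ → ℝ, Measurable lam0 → Measurable M0 →
        (∀ u ∈ Set.Icc (0:ℝ) 1, c1 ≤ lam0 u ∧ lam0 u ≤ c2) →
        (∀ u ∈ Set.Icc (0:ℝ) 1, 0 ≤ M0 u ∧ M0 u ≤ 1) →
      ∀ n : ℕ, 1 ≤ n →
      ∀ t μ : ℝ, 0 < μ → |t| * μ ≤ d * Real.sqrt n →
      ∀ h : ℝ → ℝ, Measurable h →
        (∀ᵐ u ∂(volume.restrict (Set.Ioc (0:ℝ) 1)), |h u| ≤ μ) →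
        (∫ u in (0:ℝ)..1, (h u) ^ 2) ≤ D ^ 2 →
      ∀ v : ℝ, 0 ≤ v →
      ∀ lam : ℝ → ℝ, Measurable lam →
        (∀ᵐ u ∂(volume.restrict (Set.Ioc (0:ℝ) 1)), 0 ≤ lam u) →
        (∀ᵐ u ∂(volume.restrict (Set.Ioc (0:ℝ) 1)), |lam u - lam0 u| ≤ v) →
        |(n:ℝ) * ∫ u in (0:ℝ)..1, M0 u * lam0 u *
            ((lam u / lam0 u) *
                (Real.exp (-(t * h u / Real.sqrt n)) - 1 + t * h u / Real.sqrt n)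
              - t ^ 2 * (h u) ^ 2 / (2 * n))|
          ≤ C * t ^ 2 * (v + |t| * μ / Real.sqrt n) := by
  have hc2 : 0 ≤ c2 := hc1.le.trans hc12
  refine ⟨exp d * D ^ 2 * (1 + c2), by positivity, ?_⟩
  intro lam0 M0 _ _ hlam0 hM0 n hn t μ hμ htμ h hh hhμ hL2 v hv lam _ _ hlam
  have hn0 : (0 : ℝ) < n := by exact_mod_cast hn
  have hsqrt : 0 < √(n : ℝ) := sqrt_pos.2 hn0
  set w := |t| * μ / √(n : ℝ) with hw
  have hw0 : 0 ≤ w := by positivity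
  have hwd : w ≤ d := by rwa [hw, div_le_iff₀ hsqrt]
  set K := (v + c2 * w) * exp w * (t ^ 2 / n) with hK
  have hpoint : ∀ᵐ u ∂(volume.restrict (Ioc (0:ℝ) 1)), |M0 u * lam0 u *
      ((lam u / lam0 u) * (exp (-(t * h u / √(n : ℝ))) - 1 + t * h u / √(n : ℝ))
        - t ^ 2 * (h u) ^ 2 / (2 * n))| ≤ K * h u ^ 2 := by
    filter_upwards [hhμ, hlam, ae_restrict_mem measurableSet_Ioc] with u hhu hlamu hu
    obtain ⟨hlam0_lower, hlam0_upper⟩ := hlam0 u (Ioc_subset_Icc_self hu)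
    obtain ⟨hM0_lower, hM0_upper⟩ := hM0 u (Ioc_subset_Icc_self hu)
    exact abs_lan_integrand_scaled_le hn0 (abs_le.2 ⟨by linarith, hM0_upper⟩)
      (hc1.trans_le hlam0_lower) hlam0_upper hlamu (by rw [hw]; gcongr)
  have hintegral := abs_intervalIntegral_le_mul_of_ae_abs_le_mul_sq zero_le_one (by positivity) hh
    hhμ hL2 hpoint
  rw [abs_mul, abs_of_pos hn0]
  calc _ ≤ n * (K * D ^ 2) := by gcongr
    _ = exp w * D ^ 2 * t ^ 2 * (v + c2 * w) := by
        rw [hK]; field_simp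
    _ ≤ exp d * D ^ 2 * t ^ 2 * ((1 + c2) * (v + w)) := by
        gcongr
        nlinarith [mul_nonneg hc2 hv]
    _ = exp d * D ^ 2 * (1 + c2) * t ^ 2 * (v + w) := by ring

/-- Deterministic bound on the second-order LAN remainder in the right-censoring model,
under a supremum-norm constraint `‖λ − λ0‖_∞ ≤ v` on the hazard: the remainder after
perturbing the log-hazard in direction `h` by `t/√n` is `O(t²(v + |t|μ/√n))`, with a constant
depending only on `c1, c2, D, d`. -/
theorem lan_remainder_bound_sup
    (c1 c2 D d : ℝ) (hc1 : 0 < c1) (hc12 : c1 ≤ c2) (hD : 0 < D) (hd : 0 < d) :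
    ∃ C : ℝ, 0 < C ∧
      ∀ lam0 M0 : ℝ → ℝ, Measurable lam0 → Measurable M0 →
        (∀ u ∈ Set.Icc (0:ℝ) 1, c1 ≤ lam0 u ∧ lam0 u ≤ c2) →
        (∀ u ∈ Set.Icc (0:ℝ) 1, 0 ≤ M0 u ∧ M0 u ≤ 1) →
      ∀ n : ℕ, 1 ≤ n →
      ∀ t μ : ℝ, 0 < μ → |t| * μ ≤ d * Real.sqrt n →
      ∀ h : ℝ → ℝ, Measurable h →
        (∀ᵐ u ∂(volume.restrict (Set.Ioc (0:ℝ) 1)), |h u| ≤ μ) →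
        (∫ u in (0:ℝ)..1, (h u) ^ 2) ≤ D ^ 2 →
      ∀ v : ℝ, 0 ≤ v →
      ∀ lam : ℝ → ℝ, Measurable lam →
        (∀ᵐ u ∂(volume.restrict (Set.Ioc (0:ℝ) 1)), 0 ≤ lam u) →
        (∀ᵐ u ∂(volume.restrict (Set.Ioc (0:ℝ) 1)), |lam u - lam0 u| ≤ v) →
        |(n:ℝ) * ∫ u in (0:ℝ)..1, M0 u * lam0 u *
            ((lam u / lam0 u) *
                (Real.exp (-(t * h u / Real.sqrt n)) - 1 + t * h u / Real.sqrt n)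
              - t ^ 2 * (h u) ^ 2 / (2 * n))|
          ≤ C * t ^ 2 * (v + |t| * μ / Real.sqrt n) :=
  lan_remainder_bound_sup_general c1 c2 D d hc1 hc12 hD
end
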